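/- For all natural numbers n and k, the number of lattice paths from (0,0) to (n,k) using up-steps (1,1), down-steps (1,-1) and horizontal steps (1,0), which never go below the x-axis and in which every horizontal step occurs at height 0 (i.e., goes from some (i,0) to (i+1,0)), equals the binomial coefficient C(n, ⌊(n-k)/2⌋) (interpreted as 0 when ⌊(n-k)/2⌋ < 0). -/

import Mathlib

/-- A step of a lattice path: up-step (1,1), down-step (1,-1), or horizontal step (1,0). -/
inductive Step where
  | U : Step
  | D : Step
  | H : Step
deriving DecidableEq

instance : Fintype Step where
  elems := {Step.U, Step.D, Step.H}
  complete := fun x => by cases x <;> simp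

/-- The change in the second coordinate produced by a step. -/
def stepVal : Step → ℤ
  | .U => 1
  | .D => -1
  | .H => 0

/-- The height (second coordinate) reached after performing the steps of `l`, starting at 0. -/
def hgt (l : List Step) : ℤ := (l.map stepVal).sum

/-!
Sort the paths by their last step. A horizontal step may only end a path at height 0, so with
`f n k` the number of paths of length `n` ending at height `k`,
`f (n+1) (k+1) = f n k + f n (k+2)` and `f (n+1) 0 = f n 1 + f n 0`. The numbers
`C(n, ⌊(n-k)/2⌋)` obey the same recurrences by Pascal's rule (the second one also uses
`C(2m+1, m) = C(2m+1, m+1)`), and both start from `f 0 k = [k = 0]`.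
-/

namespace List

variable {α : Type*}

theorem forall_take_append_singleton_iff (p : List α → Prop) (l : List α) (a : α) :
    (∀ i, p ((l ++ [a]).take i)) ↔ (∀ i, p (l.take i)) ∧ p (l ++ [a]) := by
  constructor
  · intro h
    refine ⟨fun i => ?_, by simpa [take_of_length_le] using h (l.length + 1)⟩
    rcases le_or_gt i l.length with hi | hi
    · simpa [take_append_of_le_length hi] using h i
    · simpa [take_of_length_le hi.le] using h l.length
  · rintro ⟨hl, hla⟩ i
    rcases le_or_gt i l.length with hi | hi
    · simpa [take_append_of_le_length hi] using hl i
    · rwa [take_of_length_le (by simp; omega)]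

theorem forall_getElem?_append_singleton_iff (p : List α → Prop) (l : List α) (a b : α) :
    (∀ i, (l ++ [a])[i]? = some b → p ((l ++ [a]).take i)) ↔
      (∀ i, l[i]? = some b → p (l.take i)) ∧ (a = b → p l) := by
  constructor
  · intro h
    refine ⟨fun i hi => ?_, fun hab => by simpa [hab] using h l.length⟩
    obtain ⟨hil, -⟩ := getElem?_eq_some_iff.1 hi
    simpa [getElem?_append_left hil, take_append_of_le_length hil.le, hi] using h i
  · rintro ⟨hl, hab⟩ i hi
    rcases lt_trichotomy i l.length with hil | rfl | hil
    · rw [getElem?_append_left hil] at hi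
      simpa [take_append_of_le_length hil.le] using hl i hi
    · simpa using hab (by simpa using hi)
    · simp [getElem?_eq_none (by simp; omega : (l ++ [a]).length ≤ i)] at hi

end List

lemma hgt_append (l l' : List Step) : hgt (l ++ l') = hgt l + hgt l' := by
  simp [hgt]

lemma hgt_singleton (s : Step) : hgt [s] = stepVal s := by
  simp [hgt]

def groundedPaths (n : ℕ) (k : ℤ) : Set (List Step) :=
  {l | l.length = n ∧ hgt l = k ∧
      (∀ i : ℕ, 0 ≤ hgt (l.take i)) ∧
      (∀ i : ℕ, l[i]? = some Step.H → hgt (l.take i) = 0)}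

section groundedPaths

variable {n : ℕ} {k : ℤ} {l : List Step}

lemma groundedPaths_finite (n : ℕ) (k : ℤ) : (groundedPaths n k).Finite :=
  (List.finite_length_eq Step n).subset fun _ hl => hl.1

lemma nonneg_of_mem_groundedPaths (hl : l ∈ groundedPaths n k) : 0 ≤ k := by
  simpa [List.take_of_length_le le_rfl, hl.2.1] using hl.2.2.1 l.length

lemma mem_groundedPaths_zero : l ∈ groundedPaths 0 k ↔ l = [] ∧ k = 0 := by
  constructor
  · rintro ⟨hlen, hk, -, -⟩
    obtain rfl := List.length_eq_zero_iff.1 hlen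
    exact ⟨rfl, by simpa [hgt] using hk.symm⟩
  · rintro ⟨rfl, rfl⟩
    exact ⟨rfl, rfl, fun _ => by simp [hgt], fun _ hi => by simp at hi⟩

lemma append_singleton_mem_groundedPaths_iff (hk : 0 ≤ k) (s : Step) :
    l ++ [s] ∈ groundedPaths (n + 1) k ↔
      l ∈ groundedPaths n (k - stepVal s) ∧ (s = Step.H → k = 0) := by
  simp only [groundedPaths, Set.mem_ofPred_eq,
    List.forall_take_append_singleton_iff (fun l => 0 ≤ hgt l),
    List.forall_getElem?_append_singleton_iff (fun l => hgt l = 0),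
    List.length_append, List.length_singleton, hgt_append, hgt_singleton]
  cases s <;> simp only [stepVal] <;> grind

lemma card_groundedPaths_zero (k : ℤ) :
    Nat.card (groundedPaths 0 k) = if k = 0 then 1 else 0 := by
  split_ifs with hk
  · rw [show groundedPaths 0 k = {[]} by ext; simp [mem_groundedPaths_zero, hk]]
    simp
  · rw [show groundedPaths 0 k = ∅ by ext; simp [mem_groundedPaths_zero, hk]]
    simp

lemma card_groundedPaths_of_neg (hk : k < 0) : Nat.card (groundedPaths n k) = 0 := by
  rw [show groundedPaths n k = ∅ from
    Set.eq_empty_of_forall_notMem fun _ hl => hk.not_ge (nonneg_of_mem_groundedPaths hl)]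
  simp

lemma card_groundedPaths_succ (hk : 0 ≤ k) :
    Nat.card (groundedPaths (n + 1) k) =
      ∑ s : Step, if s = Step.H → k = 0 then Nat.card (groundedPaths n (k - stepVal s)) else 0 := by
  let extend : (Σ s : Step, {l // l ∈ groundedPaths n (k - stepVal s) ∧ (s = Step.H → k = 0)}) →
      groundedPaths (n + 1) k :=
    fun ⟨s, l, hl⟩ => ⟨l ++ [s], (append_singleton_mem_groundedPaths_iff hk s).2 hl⟩
  have extend_injective : extend.Injective := by
    rintro ⟨s, l, hl⟩ ⟨s', l', hl'⟩ h
    obtain ⟨rfl, rfl⟩ : l = l' ∧ s = s' := by simpa [extend] using h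
    rfl
  have extend_surjective : extend.Surjective := by
    rintro ⟨l, hl⟩
    obtain rfl | ⟨l', s, rfl⟩ : l = [] ∨ ∃ l' s, l = l' ++ [s] := by
      simpa using l.eq_nil_or_concat
    · simp [groundedPaths] at hl
    · exact ⟨⟨s, l', (append_singleton_mem_groundedPaths_iff hk s).1 hl⟩, rfl⟩
  have : ∀ s : Step, Finite {l // l ∈ groundedPaths n (k - stepVal s) ∧ (s = Step.H → k = 0)} :=
    fun s => ((groundedPaths_finite n _).subset fun _ hl => hl.1).to_subtype
  rw [← Nat.card_eq_of_bijective extend ⟨extend_injective, extend_surjective⟩, Nat.card_sigma]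
  refine Finset.sum_congr rfl fun s _ => ?_
  split_ifs with hs
  · simp only [eq_true hs, and_true]
  · simp [hs]

lemma card_groundedPaths_succ_zero (n : ℕ) :
    Nat.card (groundedPaths (n + 1) 0) =
      Nat.card (groundedPaths n 1) + Nat.card (groundedPaths n 0) := by
  have h := card_groundedPaths_of_neg (n := n) (k := -1) (by norm_num)
  rw [Nat.card_coe_set_eq] at h
  rw [card_groundedPaths_succ le_rfl]
  simp [Finset.univ, Fintype.elems, stepVal, h]

lemma card_groundedPaths_succ_of_pos (hk : 0 < k) :
    Nat.card (groundedPaths (n + 1) k) =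
      Nat.card (groundedPaths n (k - 1)) + Nat.card (groundedPaths n (k + 1)) := by
  rw [card_groundedPaths_succ hk.le]
  simp [Finset.univ, Fintype.elems, stepVal, hk.ne']

end groundedPaths

def binomHalf (n k : ℕ) : ℕ := if k ≤ n then n.choose ((n - k) / 2) else 0

lemma binomHalf_zero_left (k : ℕ) : binomHalf 0 k = if k = 0 then 1 else 0 := by
  simp [binomHalf]

lemma binomHalf_succ_zero (n : ℕ) : binomHalf (n + 1) 0 = binomHalf n 1 + binomHalf n 0 := by
  obtain ⟨m, rfl | rfl⟩ := Nat.even_or_odd' n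
  · rcases m with _ | m
    · simp [binomHalf]
    · simp only [binomHalf, if_pos (show 1 ≤ 2 * (m + 1) by omega), zero_le, if_true, Nat.sub_zero]
      rw [show (2 * (m + 1) + 1) / 2 = m + 1 by omega, show (2 * (m + 1) - 1) / 2 = m by omega,
        show 2 * (m + 1) / 2 = m + 1 by omega]
      exact Nat.choose_succ_succ _ _
  · simp only [binomHalf, if_pos (show 1 ≤ 2 * m + 1 by omega), zero_le, if_true, Nat.sub_zero]
    rw [show (2 * m + 1 + 1) / 2 = m + 1 by omega, show (2 * m + 1 - 1) / 2 = m by omega,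
      show (2 * m + 1) / 2 = m by omega, Nat.choose_succ_succ]
    congr 1
    exact Nat.choose_symm_half m

lemma binomHalf_succ_succ (n k : ℕ) :
    binomHalf (n + 1) (k + 1) = binomHalf n k + binomHalf n (k + 2) := by
  unfold binomHalf
  by_cases hkn : k ≤ n
  · rw [if_pos (by omega), if_pos hkn, Nat.add_sub_add_right]
    by_cases hk2 : k + 2 ≤ n
    · rw [if_pos hk2, Nat.choose_succ_left _ _ (by omega), add_comm,
        show (n - (k + 2)) / 2 = (n - k) / 2 - 1 by omega]
    · rw [if_neg hk2, show (n - k) / 2 = 0 by omega]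
      simp
  · rw [if_neg (by omega), if_neg hkn, if_neg (by omega)]

theorem card_groundedPaths (n k : ℕ) : Nat.card (groundedPaths n k) = binomHalf n k := by
  induction n generalizing k with
  | zero =>
    rw [card_groundedPaths_zero, binomHalf_zero_left]
    simp
  | succ n ih =>
    cases k with
    | zero =>
      rw [binomHalf_succ_zero, ← ih 1, ← ih 0]
      exact card_groundedPaths_succ_zero n
    | succ k =>
      rw [card_groundedPaths_succ_of_pos (by positivity), show ((k + 1 : ℕ) : ℤ) - 1 = k by omega,
        show ((k + 1 : ℕ) : ℤ) + 1 = ((k + 2 : ℕ) : ℤ) by omega, ih, ih, binomHalf_succ_succ]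

/-- The number of lattice paths from `(0,0)` to `(n,k)` with up-, down- and horizontal steps,
never going below the x-axis and with all horizontal steps at height `0`, is
`C(n, ⌊(n-k)/2⌋)`, interpreted as `0` when `⌊(n-k)/2⌋ < 0`, i.e. when `k > n`. -/
theorem stmt0 (n k : ℕ) :
    Nat.card {l : List Step //
      l.length = n ∧ hgt l = k ∧
      (∀ i : ℕ, 0 ≤ hgt (l.take i)) ∧
      (∀ i : ℕ, l[i]? = some Step.H → hgt (l.take i) = 0)}
    = if k ≤ n then n.choose ((n - k) / 2) else 0 :=
  card_groundedPaths n k
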